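/- arXiv:0808.0487 — 2 statements merged into one kernel-verified Lean document; each statement's English description precedes it below -/
import Mathlib

section
/- For every k ∈ ℕ^s, (1/p^m) Σ_{n=0}^{p^m−1} wal_k(x_n) = 1 if k belongs to the dual net D(C), and = 0 otherwise, where x_0,…,x_{p^m−1} are the points of the digital net P(C). -/
/-!
Writing `n⃗` for the digit vector of `n`, the `j`-th coordinate of the net point `x_n` has the
digits `C_j n⃗` followed by zeros, so `wal_k(x_n) = ψ(n⃗ ⬝ (C·k))` for the standard additive
character `ψ` of `ℤ_p`. As `n` runs over `0, …, p^m - 1`, `n⃗` runs over all of `ℤ_p^m`, and the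
sum of `v ↦ ψ(v ⬝ w)` over `ℤ_p^m` is `p^m` if `w = 0` and `0` otherwise, by orthogonality of
characters.
-/

open scoped BigOperators

/-- `ω_p = exp(2πi/p)`. -/
noncomputable def omega (p : ℕ) : ℂ := Complex.exp (2 * Real.pi * Complex.I / p)

/-- The `i`-th base-`p` digit of the natural number `n` (starting from `i = 0`). -/
def ndigit (p n i : ℕ) : ℕ := (n / p ^ i) % p

/-- The `i`-th base-`p` digit of the real number `x` (starting from `i = 1`):
`x_i = ⌊p^i x⌋ mod p`. -/
noncomputable def xdigit (p : ℕ) (x : ℝ) (i : ℕ) : ℕ := (⌊(p : ℝ) ^ i * x⌋).toNat % p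

/-- The base-`p` Walsh function `wal_k(x) = ω_p^{x_1 k_0 + x_2 k_1 + ⋯}`
(the digits of `k` vanish beyond index `k`, so the sum below is the full series). -/
noncomputable def wal (p k : ℕ) (x : ℝ) : ℂ :=
  omega p ^ (∑ i ∈ Finset.range (k + 1), xdigit p x (i + 1) * ndigit p k i)

/-- Multivariate Walsh function `wal_k(x) = ∏_j wal_{k_j}(x_j)`. -/
noncomputable def walS (p s : ℕ) (k : Fin s → ℕ) (x : Fin s → ℝ) : ℂ :=
  ∏ j, wal p (k j) (x j)

/-- The vector of the first `m` base-`p` digits of `n`, viewed in `ℤ_p^m`. -/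
def nvec (p m : ℕ) (n : ℕ) : Fin m → ZMod p := fun i => (ndigit p n i : ZMod p)

/-- The `n`-th point of the digital net generated by matrices `C = (C_1,…,C_s)`:
`x_{j,n} = Σ_{i=1}^m y_{j,n,i} p^{-i}` where `y⃗_{j,n} = C_j n⃗`. -/
noncomputable def netPoint (p s m : ℕ) (C : Fin s → Matrix (Fin m) (Fin m) (ZMod p)) (n : ℕ) :
    Fin s → ℝ :=
  fun j => ∑ i : Fin m, ((Matrix.mulVec (C j) (nvec p m n)) i).val / (p : ℝ) ^ (i.val + 1)

/-- `C·k = C_1ᵀ k⃗_1^{(m)} + ⋯ + C_sᵀ k⃗_s^{(m)} ∈ ℤ_p^m`. -/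
def Cdot (p s m : ℕ) (C : Fin s → Matrix (Fin m) (Fin m) (ZMod p)) (k : Fin s → ℕ) :
    Fin m → ZMod p :=
  ∑ j, Matrix.mulVec (Matrix.transpose (C j)) (nvec p m (k j))

/-- Digitwise addition modulo `p` of base-`p` digits: `k ⊕ l`. -/
def dadd (p k l : ℕ) : ℕ :=
  ∑ i ∈ Finset.range (k + l + 1), ((ndigit p k i + ndigit p l i) % p) * p ^ i

/-- Digitwise subtraction modulo `p` of base-`p` digits: `k ⊖ l`. -/
def dsub (p k l : ℕ) : ℕ :=
  ∑ i ∈ Finset.range (k + l + 1), ((ndigit p k i + (p - ndigit p l i)) % p) * p ^ i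
open Finset Matrix ZMod

theorem AddChar.map_sum_eq_prod {ι A M : Type*} [AddCommMonoid A] [CommMonoid M]
    (ψ : AddChar A M) (s : Finset ι) (f : ι → A) : ψ (∑ i ∈ s, f i) = ∏ i ∈ s, ψ (f i) := by
  have h := map_prod ψ.toMonoidHom (fun i => Multiplicative.ofAdd (f i)) s
  rwa [← ofAdd_sum] at h

theorem AddChar.sum_dotProduct_eq_ite {R R' ι : Type*} [CommRing R] [Fintype R] [DecidableEq R]
    [CommRing R'] [IsDomain R'] [Fintype ι] [DecidableEq ι] {ψ : AddChar R R'}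
    (hψ : ψ.IsPrimitive) (w : ι → R) :
    ∑ v : ι → R, ψ (v ⬝ᵥ w) = if w = 0 then (Fintype.card R : R') ^ Fintype.card ι else 0 := by
  calc ∑ v : ι → R, ψ (v ⬝ᵥ w)
      = ∑ v : ι → R, ∏ i, ψ (v i * w i) := by
        simp only [dotProduct, AddChar.map_sum_eq_prod]
    _ = ∏ i, ∑ b : R, ψ (b * w i) := (Fintype.prod_sum fun i b => ψ (b * w i)).symm
    _ = ∏ i, if w i = 0 then (Fintype.card R : R') else 0 := by
        simp only [AddChar.sum_mulShift _ hψ, apply_ite Nat.cast, Nat.cast_zero]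
    _ = _ := by
        rw [prod_ite_zero, prod_const, card_univ]
        simp only [mem_univ, forall_const, funext_iff, Pi.zero_apply]

section Digits

variable {p : ℕ} [NeZero p]

theorem omega_pow_eq_stdAddChar (a : ℕ) : omega p ^ a = stdAddChar (a : ZMod p) := by
  rw [← Int.cast_natCast, stdAddChar_coe, omega, ← Complex.exp_nat_mul]
  push_cast
  ring_nf

theorem xdigit_natCast_div_pow {N m r : ℕ} (h : r ≤ m) :
    xdigit p ((N : ℝ) / (p : ℝ) ^ m) r = ndigit p N (m - r) := by
  have hscale : (p : ℝ) ^ r * ((N : ℝ) / (p : ℝ) ^ m) = (N : ℝ) / ((p ^ (m - r) : ℕ) : ℝ) := by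
    rw [← Nat.sub_add_cancel h, pow_add]
    have hp : (p : ℝ) ≠ 0 := Nat.cast_ne_zero.2 (NeZero.ne p)
    push_cast
    rw [Nat.add_sub_cancel]
    field_simp
  rw [xdigit, hscale, Int.floor_toNat, Nat.floor_div_natCast, Nat.floor_natCast, ndigit]

theorem xdigit_natCast_div_pow_of_lt {N m r : ℕ} (h : m < r) :
    xdigit p ((N : ℝ) / (p : ℝ) ^ m) r = 0 := by
  have hscale : (p : ℝ) ^ r * ((N : ℝ) / (p : ℝ) ^ m) = ((N * p ^ (r - m) : ℕ) : ℝ) := by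
    rw [← Nat.sub_add_cancel h.le, pow_add]
    have hp : (p : ℝ) ≠ 0 := Nat.cast_ne_zero.2 (NeZero.ne p)
    push_cast
    rw [Nat.add_sub_cancel]
    field_simp
  rw [xdigit, hscale, Int.floor_natCast, Int.toNat_natCast]
  exact Nat.mod_eq_zero_of_dvd (dvd_mul_of_dvd_right (dvd_pow_self p (by omega)) N)

end Digits

section NetCoordinate

variable {p : ℕ} [NeZero p] {m : ℕ}

noncomputable def netCoord (y : Fin m → ZMod p) : ℝ :=
  ∑ i : Fin m, ((y i).val : ℝ) / (p : ℝ) ^ ((i : ℕ) + 1)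

-- `p ^ m * netCoord y`: the base-`p` digits of this integer are those of `y`, in reverse order.
def revDigits (y : Fin m → ZMod p) : ℕ :=
  finFunctionFinEquiv fun i : Fin m => (⟨(y i.rev).val, ZMod.val_lt _⟩ : Fin p)

theorem ndigit_revDigits (y : Fin m → ZMod p) (i : Fin m) :
    ndigit p (revDigits y) i = (y i.rev).val := by
  rw [revDigits, ndigit, ← finFunctionFinEquiv_symm_apply_val, Equiv.symm_apply_apply]

theorem netCoord_eq_revDigits_div (y : Fin m → ZMod p) :
    netCoord y = (revDigits y : ℝ) / (p : ℝ) ^ m := by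
  have hp : (p : ℝ) ≠ 0 := Nat.cast_ne_zero.2 (NeZero.ne p)
  rw [eq_div_iff (pow_ne_zero _ hp), netCoord, revDigits, finFunctionFinEquiv_apply, sum_mul,
    ← Equiv.sum_comp Fin.revPerm]
  push_cast
  refine sum_congr rfl fun i _ => ?_
  have hpow : (p : ℝ) ^ m = (p : ℝ) ^ (i : ℕ) * (p : ℝ) ^ ((i.rev : ℕ) + 1) := by
    rw [← pow_add, Fin.val_rev]
    congr 1
    omega
  rw [hpow, Fin.revPerm_apply]
  field_simp

theorem xdigit_succ_netCoord (y : Fin m → ZMod p) (i : ℕ) :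
    xdigit p (netCoord y) (i + 1) = if h : i < m then (y ⟨i, h⟩).val else 0 := by
  rw [netCoord_eq_revDigits_div]
  split_ifs with h
  · rw [xdigit_natCast_div_pow h, show m - (i + 1) = ((Fin.rev ⟨i, h⟩ : Fin m) : ℕ) by
      simp only [Fin.val_rev], ndigit_revDigits, Fin.rev_rev]
  · exact xdigit_natCast_div_pow_of_lt (by omega)

end NetCoordinate

section Walsh

variable {p : ℕ} [Fact (1 < p)]

theorem ndigit_eq_zero_of_lt {k i : ℕ} (h : k < i) : ndigit p k i = 0 := by
  have hk : k < p ^ i := (Nat.lt_pow_self Fact.out).trans_le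
    (Nat.pow_le_pow_right (by have : 1 < p := Fact.out; omega) h.le)
  rw [ndigit, Nat.div_eq_of_lt hk, Nat.zero_mod]

theorem wal_netCoord {m : ℕ} (k : ℕ) (y : Fin m → ZMod p) :
    wal p k (netCoord y) = stdAddChar (y ⬝ᵥ nvec p m k) := by
  set g : ℕ → ℕ := fun i => xdigit p (netCoord y) (i + 1) * ndigit p k i
  have hg : ∀ i ≥ min (k + 1) m, g i = 0 := by
    intro i hi
    rcases min_le_iff.1 hi with hk | hm
    · simp only [g, ndigit_eq_zero_of_lt (p := p) (by omega : k < i), mul_zero]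
    · simp only [g, xdigit_succ_netCoord, dif_neg (by omega : ¬i < m), zero_mul]
  rw [wal, omega_pow_eq_stdAddChar]
  congr 1
  calc ((∑ i ∈ range (k + 1), g i : ℕ) : ZMod p)
      = ((∑ i ∈ range m, g i : ℕ) : ZMod p) := by
        rw [eventually_constant_sum hg (min_le_left _ _),
          eventually_constant_sum hg (min_le_right _ _)]
    _ = ∑ i : Fin m, (g i : ZMod p) := by
        rw [Nat.cast_sum, Fin.sum_univ_eq_sum_range (fun i => (g i : ZMod p))]
    _ = y ⬝ᵥ nvec p m k := by
        refine sum_congr rfl fun i _ => ?_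
        simp only [g, xdigit_succ_netCoord, dif_pos i.isLt, Nat.cast_mul, ZMod.natCast_val,
          ZMod.cast_id', id, nvec]

theorem walS_netPoint {s m : ℕ} (C : Fin s → Matrix (Fin m) (Fin m) (ZMod p)) (k : Fin s → ℕ)
    (n : ℕ) : walS p s k (netPoint p s m C n) = stdAddChar (nvec p m n ⬝ᵥ Cdot p s m C k) := by
  calc walS p s k (netPoint p s m C n)
      = ∏ j, stdAddChar (C j *ᵥ nvec p m n ⬝ᵥ nvec p m (k j)) :=
        prod_congr rfl fun j _ => wal_netCoord (k j) _
    _ = ∏ j, stdAddChar (nvec p m n ⬝ᵥ (C j)ᵀ *ᵥ nvec p m (k j)) := by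
        simp only [dotProduct_mulVec, vecMul_transpose]
    _ = stdAddChar (nvec p m n ⬝ᵥ Cdot p s m C k) := by
        rw [Cdot, dotProduct_sum, AddChar.map_sum_eq_prod]

end Walsh

theorem sum_range_pow_nvec {M : Type*} [AddCommMonoid M] {p : ℕ} [NeZero p] (m : ℕ)
    (f : (Fin m → ZMod p) → M) :
    ∑ n ∈ range (p ^ m), f (nvec p m n) = ∑ v, f v := by
  rw [← Fin.sum_univ_eq_sum_range (fun n => f (nvec p m n))]
  refine Fintype.sum_bijective (fun a : Fin (p ^ m) => nvec p m a) ?_ _ _ fun _ => rfl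
  refine (Fintype.bijective_iff_injective_and_card _).2 ⟨fun a b hab => ?_, by simp⟩
  refine finFunctionFinEquiv.symm.injective (funext fun i => Fin.ext ?_)
  have hi := (ZMod.natCast_eq_natCast_iff' _ _ _).1 (congrFun hab i)
  simpa only [finFunctionFinEquiv_symm_apply_val, ndigit, Nat.mod_mod] using hi

theorem statement3_general (p s m : ℕ) [Fact p.Prime]
    (C : Fin s → Matrix (Fin m) (Fin m) (ZMod p)) (k : Fin s → ℕ) :
    (1 / (p : ℂ) ^ m) * ∑ n ∈ Finset.range (p ^ m), walS p s k (netPoint p s m C n) =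
      if Cdot p s m C k = 0 then 1 else 0 := by
  have hp : (p : ℂ) ≠ 0 := Nat.cast_ne_zero.2 (Fact.out : p.Prime).ne_zero
  simp only [walS_netPoint]
  rw [sum_range_pow_nvec m (fun v => stdAddChar (v ⬝ᵥ Cdot p s m C k)),
    AddChar.sum_dotProduct_eq_ite (isPrimitive_stdAddChar p), ZMod.card, Fintype.card_fin]
  split_ifs
  · field_simp
  · rw [mul_zero]

/-- character property of the dual net. -/
theorem statement3 (p s m : ℕ) [Fact p.Prime] (hs : 1 ≤ s) (hm : 1 ≤ m)
    (C : Fin s → Matrix (Fin m) (Fin m) (ZMod p)) (k : Fin s → ℕ) :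
    (1 / (p : ℂ) ^ m) * ∑ n ∈ Finset.range (p ^ m), walS p s k (netPoint p s m C n) =
      if Cdot p s m C k = 0 then 1 else 0 :=
  statement3_general p s m C k
end

section
/- (Closed form of the kernel K'.) Let α > 1 be real and K̂'(k) = ((p^α − p)/(p^α(p−1))) · p^{−α·⌊log_p k⌋} for k ≥ 1. Let z ∈ (0,1) with base-p digits z_j = ⌊p^j z⌋ mod p, and suppose i ≥ 1 is such that z_j = 0 for all 1 ≤ j < i and z_i ≠ 0. Then Σ_{k=1}^∞ K̂'(k) wal_k(z) = 1 − p^{i(1−α)} (p^α − 1)/(p − 1). -/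
open scoped BigOperators

/-! Grouping `k` by its level `a = ⌊log_p k⌋`, the level sums of `wal_k(z)` are differences of
the Walsh sums `∑_{k < p^m} wal_k(z) = ∏_{j ≤ m} ∑_{d < p} ω_p^{z_j d}`, which equal `p^m` for
`m < i` and vanish for `m ≥ i`. Hence the partial sums up to `k = p^m - 1` are the same for all
`m ≥ i`, a geometric sum in `p^{1-α}`; the series converges absolutely because
`K̂'(k) ≤ C k^{-α}`. -/

open Finset Filter

section Walsh

variable {p : ℕ}

lemma omega_pow_self (hp : p ≠ 0) : omega p ^ p = 1 :=
  (Complex.isPrimitiveRoot_exp p hp).pow_eq_one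

lemma norm_wal (hp : p ≠ 0) (k : ℕ) (x : ℝ) : ‖wal p k x‖ = 1 := by
  rw [wal, norm_pow, Complex.norm_eq_one_of_pow_eq_one (omega_pow_self hp) hp, one_pow]

lemma ndigit_eq_zero_of_lt_pow {k i : ℕ} (h : k < p ^ i) : ndigit p k i = 0 := by
  rw [ndigit, Nat.div_eq_of_lt h, Nat.zero_mod]

lemma ndigit_mul_pow_add_of_lt {k d m i : ℕ} (hp : 0 < p) (hi : i < m) :
    ndigit p (d * p ^ m + k) i = ndigit p k i := by
  have hsplit : d * p ^ m + k = k + d * p ^ (m - i - 1) * p * p ^ i := by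
    rw [mul_assoc, mul_assoc, ← pow_succ', ← pow_add, show m - i - 1 + (i + 1) = m by omega]
    ring
  rw [ndigit, ndigit, hsplit, Nat.add_mul_div_right _ _ (by positivity), Nat.add_mul_mod_self_right]

lemma ndigit_mul_pow_add_self {k d m : ℕ} (hk : k < p ^ m) (hd : d < p) :
    ndigit p (d * p ^ m + k) m = d := by
  rw [ndigit, add_comm, Nat.add_mul_div_right _ _ (by omega), Nat.div_eq_of_lt hk, zero_add,
    Nat.mod_eq_of_lt hd]

lemma wal_eq_omega_pow_sum_range (hp : 1 < p) {k m : ℕ} (hk : k < p ^ m) (x : ℝ) :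
    wal p k x = omega p ^ ∑ i ∈ range m, xdigit p x (i + 1) * ndigit p k i := by
  have hvanish : ∀ n, k < p ^ n → ∀ i ∈ range (max m (k + 1)), i ∉ range n →
      xdigit p x (i + 1) * ndigit p k i = 0 := fun n hn i _ hi => by
    rw [ndigit_eq_zero_of_lt_pow
      (hn.trans_le (Nat.pow_le_pow_right hp.le (by simpa using hi))), mul_zero]
  have hk' : k < p ^ (k + 1) := (Nat.lt_pow_self hp).trans (Nat.pow_lt_pow_succ hp)
  rw [wal, sum_subset (range_subset_range.2 (le_max_right m (k + 1))) (hvanish _ hk'),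
    sum_subset (range_subset_range.2 (le_max_left m (k + 1))) (hvanish _ hk)]

lemma wal_mul_pow_add (hp : 1 < p) {k d m : ℕ} (hk : k < p ^ m) (hd : d < p) (x : ℝ) :
    wal p (d * p ^ m + k) x = omega p ^ (xdigit p x (m + 1) * d) * wal p k x := by
  have hlt : d * p ^ m + k < p ^ (m + 1) := by
    calc d * p ^ m + k < (d + 1) * p ^ m := by linarith
      _ ≤ p ^ (m + 1) := by rw [pow_succ']; exact Nat.mul_le_mul_right _ hd
  rw [wal_eq_omega_pow_sum_range hp hlt, wal_eq_omega_pow_sum_range hp hk, ← pow_add,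
    sum_range_succ, ndigit_mul_pow_add_self hk hd, add_comm,
    sum_congr rfl fun i hi => by rw [ndigit_mul_pow_add_of_lt (by omega) (mem_range.1 hi)]]

lemma sum_range_omega_pow_mul {c : ℕ} (hc : c < p) :
    ∑ d ∈ range p, omega p ^ (c * d) = if c = 0 then (p : ℂ) else 0 := by
  split_ifs with hc0
  · simp [hc0]
  · have hne : omega p ^ c ≠ 1 :=
      (Complex.isPrimitiveRoot_exp p (by omega)).pow_ne_one_of_pos_of_lt hc0 hc
    simp_rw [pow_mul]
    rw [geom_sum_eq hne, ← pow_mul, mul_comm, pow_mul, omega_pow_self (by omega), one_pow,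
      sub_self, zero_div]

end Walsh

lemma sum_range_mul_eq_sum_sum {M : Type*} [AddCommMonoid M] (F : ℕ → M) (a b : ℕ) :
    ∑ k ∈ range (a * b), F k = ∑ d ∈ range a, ∑ k ∈ range b, F (d * b + k) := by
  induction a with
  | zero => simp
  | succ a ih => rw [Nat.succ_mul, sum_range_add, ih, sum_range_succ]

lemma sum_Ico_one_pow_eq_sum_range_sum_Ico {M : Type*} [AddCommMonoid M] {p : ℕ} (hp : 1 < p)
    (F : ℕ → ℕ → M) (m : ℕ) :
    ∑ k ∈ Ico 1 (p ^ m), F (Nat.log p k) k =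
      ∑ a ∈ range m, ∑ k ∈ Ico (p ^ a) (p ^ (a + 1)), F a k := by
  induction m with
  | zero => simp
  | succ m ih =>
    rw [← sum_Ico_consecutive _ (Nat.one_le_pow _ _ (by omega))
        (Nat.pow_le_pow_right hp.le m.le_succ), ih, sum_range_succ]
    congr 1
    exact sum_congr rfl fun k hk => by
      rw [Nat.log_eq_of_pow_le_of_lt_pow (mem_Ico.1 hk).1 (mem_Ico.1 hk).2]

noncomputable def walSum (p : ℕ) (x : ℝ) (m : ℕ) : ℂ := ∑ k ∈ range (p ^ m), wal p k x

section WalSum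

variable {p : ℕ}

lemma walSum_succ (hp : 1 < p) (x : ℝ) (m : ℕ) :
    walSum p x (m + 1) = (∑ d ∈ range p, omega p ^ (xdigit p x (m + 1) * d)) * walSum p x m := by
  rw [walSum, pow_succ', sum_range_mul_eq_sum_sum, walSum, sum_mul]
  refine sum_congr rfl fun d hd => ?_
  rw [mul_sum]
  exact sum_congr rfl fun k hk => wal_mul_pow_add hp (mem_range.1 hk) (mem_range.1 hd) x

lemma walSum_eq_prod (hp : 1 < p) (x : ℝ) (m : ℕ) :
    walSum p x m = ∏ j ∈ range m, if xdigit p x (j + 1) = 0 then (p : ℂ) else 0 := by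
  induction m with
  | zero => simp [walSum, wal, ndigit]
  | succ m ih =>
    rw [walSum_succ hp, ih, prod_range_succ, mul_comm,
      sum_range_omega_pow_mul (c := xdigit p x (m + 1)) (Nat.mod_lt _ (by omega))]

lemma walSum_eq_ite (hp : 1 < p) {x : ℝ} {n : ℕ}
    (hzero : ∀ j, 1 ≤ j → j ≤ n → xdigit p x j = 0) (hne : xdigit p x (n + 1) ≠ 0) (m : ℕ) :
    walSum p x m = if m ≤ n then (p : ℂ) ^ m else 0 := by
  rw [walSum_eq_prod hp]
  split_ifs with hm
  · rw [prod_congr rfl fun j hj => if_pos (hzero (j + 1) (by omega) (by simp at hj; omega)),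
      prod_const, card_range]
  · exact prod_eq_zero (mem_range.2 (by omega : n < m)) (if_neg hne)

lemma sum_Ico_one_pow_mul_wal (hp : 1 < p) (g : ℕ → ℂ) {x : ℝ} {n m : ℕ} (hnm : n < m)
    (hzero : ∀ j, 1 ≤ j → j ≤ n → xdigit p x j = 0) (hne : xdigit p x (n + 1) ≠ 0) :
    ∑ k ∈ Ico 1 (p ^ m), g (Nat.log p k) * wal p k x =
      ∑ a ∈ range n, g a * ((p : ℂ) ^ (a + 1) - (p : ℂ) ^ a) - g n * (p : ℂ) ^ n := by
  have hlevel : ∀ a, ∑ k ∈ Ico (p ^ a) (p ^ (a + 1)), g a * wal p k x =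
      g a * (walSum p x (a + 1) - walSum p x a) := fun a => by
    rw [← mul_sum, sum_Ico_eq_sub _ (Nat.pow_le_pow_right hp.le a.le_succ), walSum, walSum]
  have hlow : ∀ a ∈ range n, g a * (walSum p x (a + 1) - walSum p x a) =
      g a * ((p : ℂ) ^ (a + 1) - (p : ℂ) ^ a) := fun a ha => by
    rw [walSum_eq_ite hp hzero hne, walSum_eq_ite hp hzero hne, if_pos (by simp at ha; omega),
      if_pos (by simp at ha; omega)]
  have hhigh : ∀ a, g (n + 1 + a) * (walSum p x (n + 1 + a + 1) - walSum p x (n + 1 + a)) = 0 :=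
    fun a => by rw [walSum_eq_ite hp hzero hne, walSum_eq_ite hp hzero hne, if_neg (by omega),
      if_neg (by omega), sub_self, mul_zero]
  obtain ⟨t, rfl⟩ : ∃ t, m = n + 1 + t := ⟨m - (n + 1), by omega⟩
  rw [sum_Ico_one_pow_eq_sum_range_sum_Ico hp (fun a k => g a * wal p k x),
    sum_congr rfl fun a _ => hlevel a, sum_range_add, sum_range_succ, sum_congr rfl hlow,
    sum_eq_zero fun a _ => hhigh a, walSum_eq_ite hp hzero hne, walSum_eq_ite hp hzero hne,
    if_neg (by omega), if_pos le_rfl]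
  ring

end WalSum

/-- `K̂'` on the level `a = ⌊log_p k⌋`. -/
noncomputable def kernelCoeff (p : ℕ) (α : ℝ) (a : ℕ) : ℝ :=
  ((p : ℝ) ^ α - p) / ((p : ℝ) ^ α * ((p : ℝ) - 1)) * (p : ℝ) ^ (-(α * (a : ℝ)))

section KernelCoeff

variable {p : ℕ} {α : ℝ}

lemma rpow_neg_mul_log_le (hp : 1 < p) (hα : 0 ≤ α) {n : ℕ} (hn : n ≠ 0) :
    (p : ℝ) ^ (-(α * (Nat.log p n : ℝ))) ≤ (p : ℝ) ^ α * (n : ℝ) ^ (-α) := by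
  have hp0 : (0 : ℝ) < p := by positivity
  have hn_le : (n : ℝ) ≤ (p : ℝ) ^ (Nat.log p n + 1) := by
    exact_mod_cast (Nat.lt_pow_succ_log_self hp n).le
  calc (p : ℝ) ^ (-(α * (Nat.log p n : ℝ)))
      = (p : ℝ) ^ α * ((p : ℝ) ^ (Nat.log p n + 1)) ^ (-α) := by
        rw [← Real.rpow_natCast, ← Real.rpow_mul hp0.le, ← Real.rpow_add hp0]
        push_cast
        ring_nf
    _ ≤ (p : ℝ) ^ α * (n : ℝ) ^ (-α) :=
        mul_le_mul_of_nonneg_left (Real.rpow_le_rpow_of_nonpos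
          (Nat.cast_pos.2 (Nat.pos_of_ne_zero hn)) hn_le (by linarith)) (by positivity)

lemma summable_kernelCoeff_mul_wal (hp : 1 < p) (hα : 1 < α) (x : ℝ) :
    Summable fun k : ℕ => (kernelCoeff p α (Nat.log p (k + 1)) : ℂ) * wal p (k + 1) x := by
  set c : ℝ := ((p : ℝ) ^ α - p) / ((p : ℝ) ^ α * ((p : ℝ) - 1))
  have hzeta : Summable fun k : ℕ => ((k + 1 : ℕ) : ℝ) ^ (-α) :=
    (summable_nat_add_iff 1).2 (Real.summable_nat_rpow.2 (by linarith))
  refine Summable.of_norm_bounded (hzeta.mul_left (|c| * (p : ℝ) ^ α)) fun k => ?_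
  rw [norm_mul, norm_wal (by omega), mul_one, Complex.norm_real, Real.norm_eq_abs, kernelCoeff,
    abs_mul, abs_of_pos (Real.rpow_pos_of_pos (by positivity) _), mul_assoc]
  exact mul_le_mul_of_nonneg_left (rpow_neg_mul_log_le hp (by linarith) k.succ_ne_zero)
    (abs_nonneg c)

lemma kernelCoeff_mul_pow (hp : 0 < p) (a : ℕ) :
    kernelCoeff p α a * (p : ℝ) ^ a =
      (1 - (p : ℝ) ^ (1 - α)) / ((p : ℝ) - 1) * ((p : ℝ) ^ (1 - α)) ^ a := by
  have hp0 : (0 : ℝ) < p := by positivity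
  have hq : (p : ℝ) ^ (1 - α) = p / (p : ℝ) ^ α := by
    rw [Real.rpow_sub hp0, Real.rpow_one]
  have hpow : (p : ℝ) ^ (-(α * (a : ℝ))) * (p : ℝ) ^ a = ((p : ℝ) ^ (1 - α)) ^ a := by
    rw [← Real.rpow_natCast, ← Real.rpow_natCast, ← Real.rpow_add hp0, ← Real.rpow_mul hp0.le]
    ring_nf
  rw [kernelCoeff, mul_assoc, hpow, hq]
  have : (p : ℝ) ^ α ≠ 0 := (Real.rpow_pos_of_pos hp0 α).ne'
  field_simp

/-- With `u = p ^ (1 - α)` the level terms are `(1 - u) u ^ a`, so the sum telescopes through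
`(1 - u) ∑_{a < n} u ^ a = 1 - u ^ n`. -/
lemma sum_range_kernelCoeff_sub (hp : 1 < p) (n : ℕ) :
    ∑ a ∈ range n, kernelCoeff p α a * ((p : ℝ) ^ (a + 1) - (p : ℝ) ^ a) -
        kernelCoeff p α n * (p : ℝ) ^ n =
      1 - (p : ℝ) ^ (((n + 1 : ℕ) : ℝ) * (1 - α)) * ((p : ℝ) ^ α - 1) / ((p : ℝ) - 1) := by
  have hp0 : (0 : ℝ) < p := by positivity
  have hp1 : (p : ℝ) - 1 ≠ 0 := by
    have : (1 : ℝ) < p := by exact_mod_cast hp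
    linarith
  set u : ℝ := (p : ℝ) ^ (1 - α) with hu
  have hterm : ∀ a : ℕ, kernelCoeff p α a * ((p : ℝ) ^ (a + 1) - (p : ℝ) ^ a) =
      (1 - u) * u ^ a := fun a => by
    rw [pow_succ, show (p : ℝ) ^ a * p - (p : ℝ) ^ a = (p : ℝ) ^ a * (p - 1) by ring, ← mul_assoc,
      kernelCoeff_mul_pow (by omega), ← hu]
    field_simp
  have hlast : (p : ℝ) ^ (((n + 1 : ℕ) : ℝ) * (1 - α)) * ((p : ℝ) ^ α - 1) = u ^ n * (p - u) := by
    rw [mul_comm ((n + 1 : ℕ) : ℝ), Real.rpow_mul hp0.le, Real.rpow_natCast, pow_succ, hu,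
      mul_assoc, mul_sub, ← Real.rpow_add hp0, sub_add_cancel, Real.rpow_one, mul_one]
  rw [sum_congr rfl fun a _ => hterm a, ← mul_sum, mul_neg_geom_sum,
    kernelCoeff_mul_pow (by omega), ← hu, hlast]
  field_simp
  ring

end KernelCoeff

lemma tsum_eq_of_eventually_sum_range_eq {E : Type*} [AddCommMonoid E] [TopologicalSpace E]
    [T2Space E] {f : ℕ → E} (hf : Summable f) {N : ℕ → ℕ} (hN : Tendsto N atTop atTop) {s : E}
    (h : ∀ᶠ m in atTop, ∑ k ∈ range (N m), f k = s) : ∑' k, f k = s :=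
  tendsto_nhds_unique (hf.hasSum.tendsto_sum_nat.comp hN)
    (tendsto_const_nhds.congr' (h.mono fun _ hm => hm.symm))

theorem statement14_general (p : ℕ) (hp : p.Prime) (α : ℝ) (hα : 1 < α)
    (z : ℝ) (i : ℕ) (hi : 1 ≤ i)
    (hzj : ∀ j : ℕ, 1 ≤ j → j < i → xdigit p z j = 0) (hzi : xdigit p z i ≠ 0) :
    ∑' k : ℕ, ((((p : ℝ) ^ α - p) / ((p : ℝ) ^ α * ((p : ℝ) - 1)) *
          (p : ℝ) ^ (-(α * (Nat.log p (k + 1) : ℝ))) : ℝ) : ℂ) * wal p (k + 1) z =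
      ((1 - (p : ℝ) ^ ((i : ℝ) * (1 - α)) * ((p : ℝ) ^ α - 1) / ((p : ℝ) - 1) : ℝ) : ℂ) := by
  obtain ⟨n, rfl⟩ : ∃ n, i = n + 1 := ⟨i - 1, by omega⟩
  change ∑' k : ℕ, (kernelCoeff p α (Nat.log p (k + 1)) : ℂ) * wal p (k + 1) z = _
  have hp1 := hp.one_lt
  have hzero : ∀ j, 1 ≤ j → j ≤ n → xdigit p z j = 0 := fun j hj hjn => hzj j hj (by omega)
  refine tsum_eq_of_eventually_sum_range_eq (summable_kernelCoeff_mul_wal hp1 hα z)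
    ((tendsto_sub_atTop_nat 1).comp (tendsto_pow_atTop_atTop_of_one_lt hp1)) ?_
  filter_upwards [eventually_gt_atTop n] with m hm
  have hshift := sum_Ico_eq_sum_range
    (fun k => (kernelCoeff p α (Nat.log p k) : ℂ) * wal p k z) 1 (p ^ m)
  simp only [add_comm 1] at hshift
  rw [Function.comp_apply, ← hshift,
    sum_Ico_one_pow_mul_wal hp1 (fun a => (kernelCoeff p α a : ℂ)) hm hzero hzi]
  exact_mod_cast sum_range_kernelCoeff_sub hp1 n

/-- closed form of the kernel `K'`:
`Σ_{k≥1} K̂'(k) wal_k(z) = 1 − p^{i(1−α)}(p^α−1)/(p−1)` when the first nonzero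
base-`p` digit of `z` is the `i`-th one. -/
theorem statement14 (p : ℕ) (hp : p.Prime) (α : ℝ) (hα : 1 < α)
    (z : ℝ) (hz0 : 0 < z) (hz1 : z < 1) (i : ℕ) (hi : 1 ≤ i)
    (hzj : ∀ j : ℕ, 1 ≤ j → j < i → xdigit p z j = 0) (hzi : xdigit p z i ≠ 0) :
    ∑' k : ℕ, ((((p : ℝ) ^ α - p) / ((p : ℝ) ^ α * ((p : ℝ) - 1)) *
          (p : ℝ) ^ (-(α * (Nat.log p (k + 1) : ℝ))) : ℝ) : ℂ) * wal p (k + 1) z =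
      ((1 - (p : ℝ) ^ ((i : ℝ) * (1 - α)) * ((p : ℝ) ^ α - 1) / ((p : ℝ) - 1) : ℝ) : ℂ) :=
  statement14_general p hp α hα z i hi hzj hzi
end
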